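/- arXiv:2509.02715 — 5 statements merged into one kernel-verified Lean document; each statement's English description precedes it below -/
import Mathlib

section
/- Let E, A, B, C, Q be real matrices (E, A, Q of size n×n, B of size n×m, C of size m×n) with C = B^T Q, and let F be a real symmetric negative semidefinite m×m matrix. If A = (J − R)Q with J skew-symmetric and Q^T R Q = Q^T R^T Q positive semidefinite, then A + BFC = (J − (R − B F B^T))Q, and Q^T (R − B F B^T) Q is symmetric positive semidefinite. -/
open Matrix

theorem stmt_2 {n m : ℕ}
    (E A J R Q : Matrix (Fin n) (Fin n) ℝ)
    (B : Matrix (Fin n) (Fin m) ℝ) (C : Matrix (Fin m) (Fin n) ℝ)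
    (F : Matrix (Fin m) (Fin m) ℝ)
    (hC : C = Bᵀ * Q)
    (hFsym : Fᵀ = F) (hFnsd : (-F).PosSemidef)
    (hA : A = (J - R) * Q)
    (hJ : Jᵀ = -J)
    (hRsym : Qᵀ * R * Q = Qᵀ * Rᵀ * Q)
    (hRpsd : (Qᵀ * R * Q).PosSemidef) :
    A + B * F * C = (J - (R - B * F * Bᵀ)) * Q ∧
      (Qᵀ * (R - B * F * Bᵀ) * Q).PosSemidef := by
  subst hC hA
  constructor
  · noncomm_ring
    simp [Matrix.mul_assoc]
  · have h1 : Qᵀ * (R - B * F * Bᵀ) * Q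
        = Qᵀ * R * Q + (Bᵀ * Q)ᴴ * (-F) * (Bᵀ * Q) := by
      rw [conjTranspose_eq_transpose_of_trivial]
      noncomm_ring
      simp [Matrix.mul_assoc]
    rw [h1]
    exact hRpsd.add (hFnsd.conjTranspose_mul_mul_same _)
end

section
/- Let A, B, C be real matrices with C invertible (C m×m, A m×m), and suppose the stacked matrix [C; A] admits a factorization [C; A] = L·[R; 0] where L = [[L11,L12],[L21,L22]] is orthogonal (L11 m×m) and R is invertible. Then L11 and L22 are invertible and A C^{-1} = L21 L11^{-1}. -/
/-!
Reading off the blocks of the factorization gives `C = L₁₁ R` and `A = L₂₁ R`, so `L₁₁` is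
invertible because `C` is, and `A C⁻¹ = L₂₁ R R⁻¹ L₁₁⁻¹ = L₂₁ L₁₁⁻¹`. For `L₂₂`, the identity
`L Lᵀ = 1` gives `L₂₂ L₂₂ᵀ + L₂₁ L₂₁ᵀ = 1` and `L₂₂ L₁₂ᵀ = -L₂₁ L₁₁ᵀ`; eliminating `L₂₁ᵀ` through
`L₁₁ᵀ` exhibits `L₂₂ᵀ - L₁₂ᵀ (L₁₁ᵀ)⁻¹ L₂₁ᵀ` as a right inverse of `L₂₂`.
-/

open Matrix

namespace Matrix

variable {n p q : Type*} [Fintype n] [Fintype p] {α : Type*} [CommRing α]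

theorem fromBlocks_mul_fromRows_zero (L₁₁ : Matrix n n α) (L₁₂ : Matrix n p α)
    (L₂₁ : Matrix p n α) (L₂₂ : Matrix p p α) (R : Matrix n q α) :
    fromBlocks L₁₁ L₁₂ L₂₁ L₂₂ * fromRows R 0 = fromRows (L₁₁ * R) (L₂₁ * R) :=
  -- The rectangular `*` above elaborates to `CStarMatrix`'s `HMul` instance, which `simp` and `rw`
  -- do not match against `fromBlocks_mul_fromRows`; `trans` unifies the two up to defeq.
  (fromBlocks_mul_fromRows _ _ _ _ _ _).trans (by simp)

theorem isUnit_det₂₂_of_transpose_mul_fromBlocks_eq_one [DecidableEq n] [DecidableEq p]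
    {L₁₁ : Matrix n n α} {L₁₂ : Matrix n p α} {L₂₁ : Matrix p n α} {L₂₂ : Matrix p p α}
    (horth : (fromBlocks L₁₁ L₁₂ L₂₁ L₂₂)ᵀ * fromBlocks L₁₁ L₁₂ L₂₁ L₂₂ = 1)
    (h₁₁ : IsUnit L₁₁.det) : IsUnit L₂₂.det := by
  have horth' := mul_eq_one_comm.mp horth
  rw [fromBlocks_transpose, fromBlocks_multiply, ← fromBlocks_one, fromBlocks_inj] at horth'
  obtain ⟨-, -, h₂₁, h₂₂⟩ := horth'
  have hL₁₁t : IsUnit L₁₁ᵀ.det := by rwa [det_transpose]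
  have hneg : L₂₂ * L₁₂ᵀ = -(L₂₁ * L₁₁ᵀ) := eq_neg_of_add_eq_zero_right h₂₁
  have hinv : L₂₂ * (L₂₂ᵀ - L₁₂ᵀ * (L₁₁ᵀ)⁻¹ * L₂₁ᵀ) = 1 :=
    calc L₂₂ * (L₂₂ᵀ - L₁₂ᵀ * (L₁₁ᵀ)⁻¹ * L₂₁ᵀ)
        = L₂₂ * L₂₂ᵀ - L₂₂ * L₁₂ᵀ * (L₁₁ᵀ)⁻¹ * L₂₁ᵀ := by
          rw [Matrix.mul_sub, Matrix.mul_assoc, Matrix.mul_assoc, Matrix.mul_assoc]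
      _ = L₂₂ * L₂₂ᵀ + L₂₁ * (L₁₁ᵀ * (L₁₁ᵀ)⁻¹) * L₂₁ᵀ := by
          rw [hneg, Matrix.neg_mul, Matrix.neg_mul, sub_neg_eq_add, Matrix.mul_assoc L₂₁]
      _ = 1 := by rw [mul_nonsing_inv _ hL₁₁t, Matrix.mul_one, add_comm, h₂₂]
  exact isUnit_det_of_right_inverse hinv

theorem mul_right_mul_inv_mul_right [DecidableEq n] {X Y R : Matrix n n α} (hR : IsUnit R.det) :
    X * R * (Y * R)⁻¹ = X * Y⁻¹ := by
  rw [Matrix.mul_inv_rev, ← Matrix.mul_assoc, Matrix.mul_assoc X, mul_nonsing_inv _ hR,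
    Matrix.mul_one]

end Matrix

theorem stmt_11 {m : ℕ}
    (A C : Matrix (Fin m) (Fin m) ℝ)
    (L11 L12 L21 L22 R : Matrix (Fin m) (Fin m) ℝ)
    (hC : IsUnit C.det)
    (horth : (fromBlocks L11 L12 L21 L22)ᵀ * fromBlocks L11 L12 L21 L22 = 1)
    (hR : IsUnit R.det)
    (hfact : fromRows C A = fromBlocks L11 L12 L21 L22 * fromRows R 0) :
    IsUnit L11.det ∧ IsUnit L22.det ∧ A * C⁻¹ = L21 * L11⁻¹ := by
  rw [fromBlocks_mul_fromRows_zero, fromRows_inj.eq_iff] at hfact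
  obtain ⟨rfl, rfl⟩ := hfact
  have hL11 : IsUnit L11.det := by
    rw [det_mul] at hC
    exact isUnit_of_mul_isUnit_left hC
  exact ⟨hL11, isUnit_det₂₂_of_transpose_mul_fromBlocks_eq_one horth hL11,
    mul_right_mul_inv_mul_right hR⟩
end

section
/- Let E, Q be real n×n matrices with E^T Q = Q^T E positive semidefinite, B real n×m, and C = B^T Q. Then rank([E; C]) ≤ rank([E, B]), where [E; C] is the vertical stack of E over C and [E, B] is the horizontal concatenation of E and B. -/
/-!
Transposing, the rank of `[E; BᵀQ]` is the dimension of `range Eᵀ + Qᵀ (range B)`. Since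
`Qᵀ (range E) = range (QᵀE) = range (EᵀQ) ⊆ range Eᵀ` and `range Eᵀ` has the dimension of
`range E`, replacing `range E` by `range Eᵀ` and `range B` by `Qᵀ (range B)` cannot raise the
dimension of `range E + range B`: a linear map loses at least as much dimension on a subspace
as on any smaller one.
-/

open Matrix Module

namespace Submodule

variable {K M N : Type*} [Field K] [AddCommGroup M] [Module K M] [AddCommGroup N] [Module K N]
  [FiniteDimensional K M]

theorem finrank_map_add_finrank_inf_ker (f : M →ₗ[K] N) (S : Submodule K M) :
    finrank K (S.map f) + finrank K ↥(S ⊓ LinearMap.ker f) = finrank K S := by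
  have h := LinearMap.finrank_range_add_finrank_ker (f.domRestrict S)
  rwa [LinearMap.range_domRestrict, LinearMap.ker_domRestrict, ← top_inf_eq (comap _ _),
    ← comap_subtype_self S, ← comap_inf, (comapSubtypeEquivOfLe inf_le_left).finrank_eq] at h

theorem finrank_map_add_finrank_le_of_le (f : M →ₗ[K] N) {U W : Submodule K M} (h : U ≤ W) :
    finrank K (W.map f) + finrank K U ≤ finrank K (U.map f) + finrank K W := by
  have hW := finrank_map_add_finrank_inf_ker f W
  have hU := finrank_map_add_finrank_inf_ker f U
  have hker : finrank K ↥(U ⊓ LinearMap.ker f) ≤ finrank K ↥(W ⊓ LinearMap.ker f) :=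
    finrank_mono (inf_le_inf_right _ h)
  omega

theorem finrank_sup_map_le [FiniteDimensional K N] (f : M →ₗ[K] N) {U V : Submodule K M}
    {U' : Submodule K N} (hU : U.map f ≤ U') (hrank : finrank K U' ≤ finrank K U) :
    finrank K ↥(U' ⊔ V.map f) ≤ finrank K ↥(U ⊔ V) := by
  have hmono : finrank K ↥(U' ⊔ V.map f) ≤ finrank K ↥(U' ⊔ (U ⊔ V).map f) :=
    finrank_mono (sup_le_sup_left (map_mono le_sup_right) U')
  have hsup := finrank_sup_add_finrank_inf_eq U' ((U ⊔ V).map f)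
  have hinf : finrank K (U.map f) ≤ finrank K ↥(U' ⊓ (U ⊔ V).map f) :=
    finrank_mono (le_inf hU (map_mono le_sup_left))
  have hmap := finrank_map_add_finrank_le_of_le f (le_sup_left : U ≤ U ⊔ V)
  omega

end Submodule

namespace Matrix

theorem range_mulVecLin_fromCols {R m n p : Type*} [CommSemiring R] [Fintype n] [Fintype p]
    (A : Matrix m n R) (B : Matrix m p R) :
    LinearMap.range (fromCols A B).mulVecLin
      = LinearMap.range A.mulVecLin ⊔ LinearMap.range B.mulVecLin := by
  simp only [range_mulVecLin, ← Submodule.span_union, ← Set.Sum.elim_range]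
  congr 2
  ext (j | j) <;> rfl

theorem rank_fromRows_mul_le_rank_fromCols {K m n k : Type*} [Field K] [Fintype m] [Fintype n]
    [Fintype k] (E Q : Matrix n k K) (B : Matrix n m K) (hE : Eᵀ * Q = Qᵀ * E) :
    (fromRows E (Bᵀ * Q)).rank ≤ (fromCols E B).rank := by
  rw [← rank_transpose, transpose_fromRows, transpose_mul, transpose_transpose, rank, rank,
    range_mulVecLin_fromCols, range_mulVecLin_fromCols, mulVecLin_mul, LinearMap.range_comp]
  refine Submodule.finrank_sup_map_le _ ?_ (rank_transpose E).le
  rw [← LinearMap.range_comp, ← mulVecLin_mul, ← hE, mulVecLin_mul, LinearMap.range_comp]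
  exact LinearMap.map_le_range

end Matrix

theorem stmt_14_general {n m : ℕ}
    (E Q : Matrix (Fin n) (Fin n) ℝ)
    (B : Matrix (Fin n) (Fin m) ℝ) (C : Matrix (Fin m) (Fin n) ℝ)
    (hE : Eᵀ * Q = Qᵀ * E)
    (hC : C = Bᵀ * Q) :
    (fromRows E C).rank ≤ (fromCols E B).rank :=
  hC ▸ rank_fromRows_mul_le_rank_fromCols E Q B hE

theorem stmt_14 {n m : ℕ}
    (E Q : Matrix (Fin n) (Fin n) ℝ)
    (B : Matrix (Fin n) (Fin m) ℝ) (C : Matrix (Fin m) (Fin n) ℝ)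
    (hE : Eᵀ * Q = Qᵀ * E) (hEpsd : (Eᵀ * Q).PosSemidef)
    (hC : C = Bᵀ * Q) :
    (fromRows E C).rank ≤ (fromCols E B).rank :=
  stmt_14_general E Q B C hE hC
end

section
/- Let E, A be real n×n matrices and let S be a real n×k matrix whose columns form a basis of the kernel of E (so k = n − rank E). If range(E) + A·(ker E) = ℝ^n (equivalently, rank([E, A·S]) = n), then the pencil (E, A) is regular, i.e., det(λE − A) is not identically zero as a polynomial in λ. -/
/-!
If `det (X • E - A) = 0`, a nonzero polynomial kernel vector `v = ∑ cₘ Xᵐ` exists, and comparing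
coefficients gives `E cₘ = A cₘ₊₁` and `A c₀ = 0`. Its top coefficient `x` then satisfies `E x = 0`
and `A x ∈ range E`. But `range E + A (ker E) = ℝⁿ` forces, by counting dimensions against
rank–nullity, both `range E ∩ A (ker E) = 0` and injectivity of `A` on `ker E`; hence `x = 0`.
-/

open Matrix Polynomial Module

namespace LinearMap

variable {K V W : Type*} [Field K] [AddCommGroup V] [Module K V] [AddCommGroup W] [Module K W]

theorem eq_zero_of_mem_of_finrank_map_eq {p : Submodule K V} [FiniteDimensional K p]
    (g : V →ₗ[K] W) (h : finrank K (p.map g) = finrank K p) {x : V} (hx : x ∈ p)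
    (hgx : g x = 0) : x = 0 := by
  have hrn := (g.domRestrict p).finrank_range_add_finrank_ker
  rw [range_domRestrict, h, add_eq_left, Submodule.finrank_eq_zero] at hrn
  have : (⟨x, hx⟩ : p) ∈ ker (g.domRestrict p) := hgx
  simpa [hrn] using this

theorem eq_zero_of_mem_ker_of_apply_mem_range [FiniteDimensional K V] {f g : V →ₗ[K] V}
    (h : range f ⊔ (ker f).map g = ⊤) {x : V} (hx : x ∈ ker f) (hgx : g x ∈ range f) :
    x = 0 := by
  have hsup := Submodule.finrank_sup_add_finrank_inf_eq (range f) ((ker f).map g)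
  rw [h, finrank_top] at hsup
  have hmap_le := Submodule.finrank_map_le g (ker f)
  have hrn := f.finrank_range_add_finrank_ker
  have hinf : range f ⊓ (ker f).map g = ⊥ := Submodule.finrank_eq_zero.mp (by omega)
  have hgx0 : g x ∈ range f ⊓ (ker f).map g := ⟨hgx, Submodule.mem_map_of_mem hx⟩
  rw [hinf, Submodule.mem_bot] at hgx0
  exact eq_zero_of_mem_of_finrank_map_eq g (by omega) hx hgx0

end LinearMap

namespace Polynomial

variable {R ι : Type*} [Semiring R]

def vecCoeff (v : ι → R[X]) (m : ℕ) : ι → R := fun i => (v i).coeff m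

theorem exists_vecCoeff_ne_zero_and_succ_eq_zero [Fintype ι] {v : ι → R[X]} (hv : v ≠ 0) :
    ∃ d, vecCoeff v d ≠ 0 ∧ vecCoeff v (d + 1) = 0 := by
  classical
  set s := Finset.univ.biUnion fun i => (v i).support
  have hs : s.Nonempty := by
    obtain ⟨i, hi⟩ := Function.ne_iff.mp hv
    exact ⟨_, Finset.mem_biUnion.mpr ⟨i, Finset.mem_univ _, natDegree_mem_support_of_nonzero hi⟩⟩
  have mem_s : ∀ m, m ∈ s ↔ vecCoeff v m ≠ 0 := fun m => by
    simp [s, vecCoeff, Function.ne_iff]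
  refine ⟨s.max' hs, (mem_s _).mp (s.max'_mem hs), not_not.mp fun h => ?_⟩
  exact (s.le_max' _ ((mem_s _).mpr h)).not_gt (Nat.lt_succ_self _)

end Polynomial

namespace Matrix

theorem range_mulVecLin_fromCols_s16 {R m n₁ n₂ : Type*} [CommSemiring R] [Fintype n₁]
    [Fintype n₂] (A₁ : Matrix m n₁ R) (A₂ : Matrix m n₂ R) :
    LinearMap.range (fromCols A₁ A₂).mulVecLin
      = LinearMap.range A₁.mulVecLin ⊔ LinearMap.range A₂.mulVecLin := by
  apply le_antisymm
  · rintro z ⟨w, rfl⟩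
    rw [mulVecLin_apply, fromCols_mulVec]
    exact Submodule.add_mem_sup ⟨w ∘ Sum.inl, rfl⟩ ⟨w ∘ Sum.inr, rfl⟩
  · refine sup_le ?_ ?_
    · rintro z ⟨w, rfl⟩
      exact ⟨Sum.elim w 0, by simp⟩
    · rintro z ⟨w, rfl⟩
      exact ⟨Sum.elim 0 w, by simp⟩

variable {R m n : Type*} [CommRing R] [Fintype n]

theorem coeff_map_C_mulVec (M : Matrix m n R) (v : n → R[X]) (i : m) (k : ℕ) :
    ((M.map C *ᵥ v) i).coeff k = (M *ᵥ vecCoeff v k) i := by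
  simp [mulVec, dotProduct, vecCoeff]

variable {E A : Matrix n n R} {v : n → R[X]}

theorem mulVec_vecCoeff_succ_of_pencil_mulVec_eq_zero
    (hv : ((X : R[X]) • E.map C - A.map C) *ᵥ v = 0) (k : ℕ) :
    E *ᵥ vecCoeff v k = A *ᵥ vecCoeff v (k + 1) := by
  ext i
  have := congrArg (fun w => (w i).coeff (k + 1)) hv
  simpa [sub_mulVec, smul_mulVec, coeff_map_C_mulVec, sub_eq_zero] using this

theorem mulVec_vecCoeff_zero_of_pencil_mulVec_eq_zero
    (hv : ((X : R[X]) • E.map C - A.map C) *ᵥ v = 0) : A *ᵥ vecCoeff v 0 = 0 := by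
  ext i
  have := congrArg (fun w => (w i).coeff 0) hv
  simpa [sub_mulVec, smul_mulVec, coeff_map_C_mulVec] using this

theorem exists_mulVec_eq_zero_and_mem_range_of_det_pencil_eq_zero [IsDomain R] [DecidableEq n]
    (hdet : ((X : R[X]) • E.map C - A.map C).det = 0) :
    ∃ x ≠ 0, E *ᵥ x = 0 ∧ A *ᵥ x ∈ LinearMap.range E.mulVecLin := by
  obtain ⟨v, hv0, hv⟩ := exists_mulVec_eq_zero_iff.mpr hdet
  obtain ⟨d, hd, hd_succ⟩ := exists_vecCoeff_ne_zero_and_succ_eq_zero hv0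
  refine ⟨vecCoeff v d, hd, ?_, ?_⟩
  · rw [mulVec_vecCoeff_succ_of_pencil_mulVec_eq_zero hv, hd_succ, mulVec_zero]
  · cases d with
    | zero => simp [mulVec_vecCoeff_zero_of_pencil_mulVec_eq_zero hv]
    | succ k => exact ⟨vecCoeff v k, mulVec_vecCoeff_succ_of_pencil_mulVec_eq_zero hv k⟩

end Matrix

theorem stmt_16_general {n k : ℕ}
    (E A : Matrix (Fin n) (Fin n) ℝ)
    (S : Matrix (Fin n) (Fin k) ℝ)
    (hSker : LinearMap.range S.mulVecLin = LinearMap.ker E.mulVecLin)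
    (hrank : (fromCols E (A * S)).rank = n) :
    ((X : ℝ[X]) • E.map (Polynomial.C) - A.map (Polynomial.C)).det ≠ 0 := by
  intro hdet
  obtain ⟨x, hx0, hEx, hAx⟩ := exists_mulVec_eq_zero_and_mem_range_of_det_pencil_eq_zero hdet
  have hcols : LinearMap.range (fromCols E (A * S)).mulVecLin = ⊤ :=
    Submodule.eq_top_of_finrank_eq (by rw [← rank, hrank, finrank_fin_fun])
  rw [range_mulVecLin_fromCols_s16, mulVecLin_mul, LinearMap.range_comp, hSker] at hcols
  exact hx0 (LinearMap.eq_zero_of_mem_ker_of_apply_mem_range hcols hEx hAx)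

theorem stmt_16 {n k : ℕ}
    (E A : Matrix (Fin n) (Fin n) ℝ)
    (S : Matrix (Fin n) (Fin k) ℝ)
    (hSinj : Function.Injective S.mulVecLin)
    (hSker : LinearMap.range S.mulVecLin = LinearMap.ker E.mulVecLin)
    (hrank : (fromCols E (A * S)).rank = n) :
    ((X : ℝ[X]) • E.map (Polynomial.C) - A.map (Polynomial.C)).det ≠ 0 :=
  stmt_16_general E A S hSker hrank
end

section
/- Let x : ℝ → ℝ^n be differentiable and u, y : ℝ → ℝ^m with E·x'(t) = (J − R)Q·x(t) + B·u(t) and y(t) = B^T Q·x(t) for all t, where J is skew-symmetric, E^T Q = Q^T E, and Q^T R Q = Q^T R^T Q. Define H(t) = (1/2)·x(t)^T E^T Q x(t). Then H'(t) = −(Q x(t))^T R (Q x(t)) + y(t)^T u(t) for all t. -/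
/-!
Differentiate `H` by the product rule. Because `EᵀQ = QᵀE`, both terms equal
`(E x') ⬝ (Q x)`, so `H' = (E x') ⬝ (Q x)`. Substituting the dynamics with `z = Q x`
gives `(J z) ⬝ z - (R z) ⬝ z + (B u) ⬝ z`; the first term vanishes as `J` is skew-symmetric
and the last is `(Bᵀ z) ⬝ u = y ⬝ u`.
-/

open Matrix

section Calculus

variable {𝕜 𝔸 ι : Type*} [NontriviallyNormedField 𝕜] [NormedRing 𝔸] [NormedAlgebra 𝕜 𝔸]
  [Fintype ι]

theorem HasDerivAt.dotProduct {f g : 𝕜 → ι → 𝔸} {f' g' : ι → 𝔸} {t : 𝕜}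
    (hf : HasDerivAt f f' t) (hg : HasDerivAt g g' t) :
    HasDerivAt (fun s => f s ⬝ᵥ g s) (f' ⬝ᵥ g t + f t ⬝ᵥ g') t := by
  have hfi := hasDerivAt_pi.mp hf
  have hgi := hasDerivAt_pi.mp hg
  simpa only [_root_.dotProduct, ← Finset.sum_add_distrib] using
    HasDerivAt.fun_sum fun i _ => (hfi i).fun_mul (hgi i)

theorem HasDerivAt.const_mulVec {κ : Type*} (M : Matrix κ ι 𝔸) {f : 𝕜 → ι → 𝔸}
    {f' : ι → 𝔸} {t : 𝕜} (hf : HasDerivAt f f' t) :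
    HasDerivAt (fun s => M *ᵥ f s) (M *ᵥ f') t :=
  hasDerivAt_pi.mpr fun i => by
    simpa only [mulVec, zero_dotProduct, zero_add] using
      (hasDerivAt_const t (M i)).dotProduct hf

end Calculus

namespace Matrix

variable {ι κ α : Type*} [Fintype ι] [Fintype κ]

theorem dotProduct_mulVec_self_eq_zero_of_transpose_eq_neg [CommRing α] [NoZeroDivisors α]
    [CharZero α] {J : Matrix ι ι α} (hJ : Jᵀ = -J) (v : ι → α) : v ⬝ᵥ J *ᵥ v = 0 := by
  rw [← CharZero.eq_neg_self_iff]
  calc v ⬝ᵥ J *ᵥ v = v ⬝ᵥ Jᵀ *ᵥ v := by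
        rw [dotProduct_mulVec, ← mulVec_transpose, dotProduct_comm]
    _ = -(v ⬝ᵥ J *ᵥ v) := by rw [hJ, neg_mulVec, dotProduct_neg]

theorem dotProduct_transpose_mul_mulVec_add [CommSemiring α] {E Q : Matrix κ ι α}
    (hE : Eᵀ * Q = Qᵀ * E) (x x' : ι → α) :
    x' ⬝ᵥ (Eᵀ * Q) *ᵥ x + x ⬝ᵥ (Eᵀ * Q) *ᵥ x' = 2 * (E *ᵥ x' ⬝ᵥ Q *ᵥ x) := by
  have h₁ : x' ⬝ᵥ (Eᵀ * Q) *ᵥ x = E *ᵥ x' ⬝ᵥ Q *ᵥ x := by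
    rw [← mulVec_mulVec, dotProduct_mulVec, vecMul_transpose]
  have h₂ : x ⬝ᵥ (Eᵀ * Q) *ᵥ x' = E *ᵥ x' ⬝ᵥ Q *ᵥ x := by
    rw [hE, ← mulVec_mulVec, dotProduct_mulVec, vecMul_transpose, dotProduct_comm]
  rw [h₁, h₂, two_mul]

theorem sub_mulVec_add_mulVec_dotProduct_of_transpose_eq_neg [CommRing α] [NoZeroDivisors α]
    [CharZero α] {J R : Matrix ι ι α} (hJ : Jᵀ = -J) (B : Matrix ι κ α) (z : ι → α) (u : κ → α) :
    ((J - R) *ᵥ z + B *ᵥ u) ⬝ᵥ z = -(z ⬝ᵥ R *ᵥ z) + Bᵀ *ᵥ z ⬝ᵥ u := by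
  have hJz : J *ᵥ z ⬝ᵥ z = 0 := by
    rw [dotProduct_comm, dotProduct_mulVec_self_eq_zero_of_transpose_eq_neg hJ]
  rw [sub_mulVec, add_dotProduct, sub_dotProduct, hJz, dotProduct_comm (R *ᵥ z),
    mulVec_transpose, ← dotProduct_mulVec, dotProduct_comm (B *ᵥ u), zero_sub]

end Matrix

theorem stmt_18_general {n m : ℕ}
    (E J R Q : Matrix (Fin n) (Fin n) ℝ)
    (B : Matrix (Fin n) (Fin m) ℝ)
    (hJ : Jᵀ = -J)
    (hE : Eᵀ * Q = Qᵀ * E)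
    (x x' : ℝ → Fin n → ℝ) (u y : ℝ → Fin m → ℝ)
    (hx : ∀ t, HasDerivAt x (x' t) t)
    (hdyn : ∀ t, E.mulVec (x' t) = ((J - R) * Q).mulVec (x t) + B.mulVec (u t))
    (hout : ∀ t, y t = (Bᵀ * Q).mulVec (x t)) :
    ∀ t, HasDerivAt (fun s => (1 / 2 : ℝ) * (x s ⬝ᵥ (Eᵀ * Q).mulVec (x s)))
      (-(Q.mulVec (x t) ⬝ᵥ R.mulVec (Q.mulVec (x t))) + y t ⬝ᵥ u t) t := by
  intro t
  have hH := ((hx t).dotProduct ((hx t).const_mulVec (Eᵀ * Q))).const_mul (1 / 2 : ℝ)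
  refine hH.congr_deriv ?_
  rw [dotProduct_transpose_mul_mulVec_add hE, hdyn t, ← mulVec_mulVec,
    sub_mulVec_add_mulVec_dotProduct_of_transpose_eq_neg hJ, hout t, ← mulVec_mulVec]
  ring

theorem stmt_18 {n m : ℕ}
    (E J R Q : Matrix (Fin n) (Fin n) ℝ)
    (B : Matrix (Fin n) (Fin m) ℝ)
    (hJ : Jᵀ = -J)
    (hE : Eᵀ * Q = Qᵀ * E)
    (hR : Qᵀ * R * Q = Qᵀ * Rᵀ * Q)
    (x x' : ℝ → Fin n → ℝ) (u y : ℝ → Fin m → ℝ)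
    (hx : ∀ t, HasDerivAt x (x' t) t)
    (hdyn : ∀ t, E.mulVec (x' t) = ((J - R) * Q).mulVec (x t) + B.mulVec (u t))
    (hout : ∀ t, y t = (Bᵀ * Q).mulVec (x t)) :
    ∀ t, HasDerivAt (fun s => (1 / 2 : ℝ) * (x s ⬝ᵥ (Eᵀ * Q).mulVec (x s)))
      (-(Q.mulVec (x t) ⬝ᵥ R.mulVec (Q.mulVec (x t))) + y t ⬝ᵥ u t) t :=
  stmt_18_general E J R Q B hJ hE x x' u y hx hdyn hout
end
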